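/- The set 𝒱_{m,n}^{(k)} of binary matrices with between 2 and m rows and between 2k+3 and n columns, where every matrix with s columns has first row T^{s,(k)}, last row B^{s,(k)}, and all inner rows in V^{s,(k)} \ {T^{s,(k)}, B^{s,(k)}}, is a non-overlapping set of matrices: no translate of one matrix of the set (other than the identity placement of a matrix onto itself) agrees with another matrix of the set on all common entries. -/

import Mathlib

open List

/-- `w` avoids `p` as a consecutive factor. -/
def Avoids (p w : List Bool) : Prop := ¬ p <:+: w

/-- The set `V^{i,(k)}` of binary strings `1^k 0 u 1 0^k` of length `i`
where `0u1` avoids `0^k` and `1^k` as factors (`true` plays the role of `1`). -/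
def Vik (k i : ℕ) : Set (List Bool) :=
  {w | ∃ u : List Bool,
      w = List.replicate k true ++ ([false] ++ u ++ [true]) ++ List.replicate k false ∧
      w.length = i ∧
      Avoids (List.replicate k false) ([false] ++ u ++ [true]) ∧
      Avoids (List.replicate k true) ([false] ++ u ++ [true])}

/-- `u` and `v` are non-overlapping (in the direction prefix-of-`u` /
suffix-of-`v`): no proper nonempty prefix of `u` equals a proper nonempty
suffix of `v`. -/
def CrossBF (u v : List Bool) : Prop :=
  ∀ p : List Bool, p ≠ [] → p ≠ u → p ≠ v → ¬(p <+: u ∧ p <:+ v)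

/-- A variable-dimension binary matrix is modeled as a list of rows.  `entryZ M i j` is
the entry of `M` in row `i`, column `j` (as integers), when it exists. -/
def entryZ (M : List (List Bool)) (i j : ℤ) : Option Bool :=
  if 0 ≤ i ∧ 0 ≤ j then (M[i.toNat]?).bind (fun r => r[j.toNat]?) else none

/-- The translate of `B` by `(a, b)` agrees with `A` on all common entries. -/
def AgreeAt (A B : List (List Bool)) (a b : ℤ) : Prop :=
  ∀ i j : ℤ, ∀ x y : Bool,
    entryZ A i j = some x → entryZ B (i - a) (j - b) = some y → x = y

/-- The supports of `A` and of the translate of `B` by `(a, b)` intersect. -/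
def MeetsAt (A B : List (List Bool)) (a b : ℤ) : Prop :=
  ∃ i j : ℤ, ∃ x y : Bool,
    entryZ A i j = some x ∧ entryZ B (i - a) (j - b) = some y

/-- `A` and `B` overlap: some translate of `B` over `A` (not the trivial
coincidence of a matrix with itself) has nonempty intersection with `A` and
agrees with `A` on all common entries. -/
def MOverlap (A B : List (List Bool)) : Prop :=
  ∃ a b : ℤ, ¬(a = 0 ∧ b = 0 ∧ A = B) ∧ MeetsAt A B a b ∧ AgreeAt A B a b

/-- The matrices `M_{h,s}^{(k)}` with `h` rows taken from `V^{s,(k)}`, first row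
`T`, last row `B`, and inner rows different from `T` and `B`. -/
def MatSet (k h s : ℕ) (T B : List Bool) : Set (List (List Bool)) :=
  {M | M.length = h ∧ M.head? = some T ∧ M.getLast? = some B ∧
       (∀ r ∈ M, r ∈ Vik k s) ∧
       (∀ i : ℕ, ∀ r : List Bool, 0 < i → i + 1 < h → M[i]? = some r →
          r ≠ T ∧ r ≠ B)}

/-! Every row is `1^k X 0^k` with `X` free of `0^k` and `1^k`, so a run of `k` ones starts only
at position `0` and a run of `k` zeros only at position `s - k`. Hence no two rows agree under a
nonzero horizontal shift, and two aligned rows that agree have the same width and are equal. An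
overlap of two matrices is therefore a vertical shift under which overlapping rows coincide.
Read as words over the alphabet of rows, the matrices are `T w B` with `w` avoiding the letters
`T ≠ B`; such words are unbordered, so the shift is zero and the two matrices are equal. -/

section

variable {α : Type*}

def AgreeShift (u v : List α) (d : ℕ) : Prop :=
  ∀ p x y, u[p + d]? = some x → v[p]? = some y → x = y

variable {u v : List α} {d : ℕ}

theorem AgreeShift.getElem?_eq (h : AgreeShift u v d) {p : ℕ} (hu : p + d < u.length)
    (hv : p < v.length) : u[p + d]? = v[p]? := by
  rw [List.getElem?_eq_getElem hu, List.getElem?_eq_getElem hv,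
    h p _ _ (List.getElem?_eq_getElem hu) (List.getElem?_eq_getElem hv)]

theorem AgreeShift.symm_zero (h : AgreeShift u v 0) : AgreeShift v u 0 :=
  fun p x y hx hy => (h p y x hy hx).symm

theorem AgreeShift.eq_of_length_eq (h : AgreeShift u v 0) (hl : u.length = v.length) : u = v :=
  List.ext_getElem hl fun p hu hv => h p _ _ (List.getElem?_eq_getElem hu) (List.getElem?_eq_getElem hv)

def IsFramed (t e : α) (l : List α) : Prop :=
  l.head? = some t ∧ l.getLast? = some e ∧
    ∀ i x, 0 < i → i + 1 < l.length → l[i]? = some x → x ≠ t ∧ x ≠ e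

namespace IsFramed

variable {t e : α} {l l' : List α}

theorem eq_zero_of_getElem?_eq (hl : IsFramed t e l) (hte : t ≠ e) {i : ℕ}
    (h : l[i]? = some t) : i = 0 := by
  obtain ⟨-, hlast, hinner⟩ := hl
  have hi : i < l.length := (List.getElem?_eq_some_iff.mp h).1
  by_contra hi0
  by_cases hin : i + 1 < l.length
  · exact (hinner i t (by omega) hin h).1 rfl
  · rw [List.getLast?_eq_getElem?, show l.length - 1 = i by omega, h] at hlast
    exact hte (Option.some.inj hlast)

theorem add_one_eq_length_of_getElem?_eq (hl : IsFramed t e l) (hte : t ≠ e) {i : ℕ}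
    (h : l[i]? = some e) : i + 1 = l.length := by
  obtain ⟨hhead, -, hinner⟩ := hl
  have hi : i < l.length := (List.getElem?_eq_some_iff.mp h).1
  by_contra hlen
  rcases Nat.eq_zero_or_pos i with rfl | hi0
  · rw [List.head?_eq_getElem?, h] at hhead
    exact hte (Option.some.inj hhead).symm
  · exact (hinner i e hi0 (by omega) h).2 rfl

theorem eq_zero_of_agreeShift (hl : IsFramed t e l) (hl' : IsFramed t e l') (hte : t ≠ e)
    {d : ℕ} (h : AgreeShift l l' d) (hd : d < l.length) : d = 0 := by
  have h0 : l'[0]? = some t := by rw [← List.head?_eq_getElem?]; exact hl'.1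
  have hd' : l[0 + d]? = some t := by
    rw [h.getElem?_eq (by omega) (List.getElem?_eq_some_iff.mp h0).1, h0]
  exact hl.eq_zero_of_getElem?_eq hte (by simpa using hd')

theorem length_le_of_agreeShift_zero (hl : IsFramed t e l) (hl' : IsFramed t e l')
    (hte : t ≠ e) (h : AgreeShift l l' 0) : l'.length ≤ l.length := by
  by_contra hlt
  have hlast : l[l.length - 1]? = some e := by rw [← List.getLast?_eq_getElem?]; exact hl.2.1
  have hpos : 0 < l.length := by
    have := (List.getElem?_eq_some_iff.mp hlast).1; omega
  have hlast' : l'[l.length - 1]? = some e := by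
    rw [← h.getElem?_eq (by omega) (by omega), add_zero, hlast]
  have := hl'.add_one_eq_length_of_getElem?_eq hte hlast'
  omega

theorem eq_of_agreeShift_zero (hl : IsFramed t e l) (hl' : IsFramed t e l') (hte : t ≠ e)
    (h : AgreeShift l l' 0) : l = l' :=
  h.eq_of_length_eq <| le_antisymm (hl'.length_le_of_agreeShift_zero hl hte h.symm_zero)
    (hl.length_le_of_agreeShift_zero hl' hte h)

end IsFramed

end

namespace Vik

variable {k s s' : ℕ} {w u v : List Bool}

theorem pos (hw : w ∈ Vik k s) : 0 < k := by
  obtain ⟨u, -, -, h0, -⟩ := hw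
  by_contra hk
  exact h0 (by simp [Nat.eq_zero_of_not_pos hk])

theorem length_eq (hw : w ∈ Vik k s) : w.length = s := by
  obtain ⟨u, rfl, hlen, -, -⟩ := hw
  exact hlen

theorem two_mul_add_two_le (hw : w ∈ Vik k s) : 2 * k + 2 ≤ s := by
  obtain ⟨u, rfl, rfl, -, -⟩ := hw
  simp only [List.length_append, List.length_replicate, List.length_cons, List.length_nil]
  omega

theorem getElem?_of_lt {i : ℕ} (hw : w ∈ Vik k s) (hi : i < k) : w[i]? = some true := by
  obtain ⟨u, rfl, -, -, -⟩ := hw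
  simp [List.getElem?_append_left, hi]

theorem getElem?_of_le {i : ℕ} (hw : w ∈ Vik k s) (hi : s - k ≤ i) (his : i < s) :
    w[i]? = some false := by
  obtain ⟨u, rfl, rfl, -, -⟩ := hw
  simp only [List.getElem?_append, List.getElem?_replicate, List.length_append,
    List.length_replicate, List.length_cons, List.length_nil] at hi his ⊢
  split_ifs <;> first | omega | rfl

theorem getElem?_self (hw : w ∈ Vik k s) : w[k]? = some false := by
  obtain ⟨u, rfl, -, -, -⟩ := hw
  simp

theorem getElem?_sub_sub_one (hw : w ∈ Vik k s) : w[s - k - 1]? = some true := by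
  obtain ⟨u, rfl, rfl, -, -⟩ := hw
  simp only [List.getElem?_append, List.getElem?_replicate, List.length_append,
    List.length_replicate, List.length_cons, List.length_nil]
  split_ifs <;> first | omega | simp_all

theorem not_run_of_le (hw : w ∈ Vik k s) {c : Bool} {p : ℕ} (hkp : k ≤ p) (hps : p + k ≤ s - k)
    (hrun : ∀ j < k, w[j + p]? = some c) : False := by
  obtain ⟨u, rfl, rfl, h0, h1⟩ := hw
  have hrep : List.replicate k c <:+: [false] ++ u ++ [true] := by
    refine List.infix_iff_getElem?.mpr ⟨p - k, by grind, fun j hj => ?_⟩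
    rw [List.length_replicate] at hj
    rw [List.getElem_replicate, ← hrun j hj]
    symm
    rw [List.getElem?_append_left (by grind), List.getElem?_append_right (by grind),
      List.length_replicate, Nat.add_sub_assoc hkp]
  cases c
  · exact h0 hrep
  · exact h1 hrep

theorem run_lt (hw : w ∈ Vik k s) {c : Bool} {p : ℕ} (hrun : ∀ j < k, w[j + p]? = some c) :
    k - 1 + p < s := by
  rw [← Vik.length_eq hw]
  exact (List.getElem?_eq_some_iff.mp (hrun (k - 1) (by have := Vik.pos hw; omega))).1

theorem not_run_true (hw : w ∈ Vik k s) {p : ℕ} (hp : 0 < p)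
    (hrun : ∀ j < k, w[j + p]? = some true) : False := by
  have hps := Vik.run_lt hw hrun
  by_cases hpk : p ≤ k
  · have := hrun (k - p) (by omega)
    rw [Nat.sub_add_cancel hpk, Vik.getElem?_self hw] at this
    cases this
  by_cases hin : p + k ≤ s - k
  · exact Vik.not_run_of_le hw (by omega) hin hrun
  · have := hrun (k - 1) (by omega)
    rw [Vik.getElem?_of_le hw (by omega) hps] at this
    cases this

theorem eq_sub_of_run_false (hw : w ∈ Vik k s) {p : ℕ}
    (hrun : ∀ j < k, w[j + p]? = some false) : p = s - k := by
  have hps := Vik.run_lt hw hrun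
  have hk := Vik.pos hw
  by_cases hpk : p < k
  · have := hrun 0 hk
    rw [zero_add, Vik.getElem?_of_lt hw hpk] at this
    cases this
  by_cases hin : p + k ≤ s - k
  · exact (Vik.not_run_of_le hw (by omega) hin hrun).elim
  by_contra hne
  have := hrun (s - k - 1 - p) (by omega)
  rw [show s - k - 1 - p + p = s - k - 1 by omega, Vik.getElem?_sub_sub_one hw] at this
  cases this

theorem not_agreeShift (hu : u ∈ Vik k s) (hv : v ∈ Vik k s') {d : ℕ} (hd : 0 < d)
    (hds : d < s) (h : AgreeShift u v d) : False := by
  have hlu := Vik.length_eq hu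
  have hks' := Vik.two_mul_add_two_le hv
  by_cases hdk : d + k ≤ s
  · refine Vik.not_run_true hu hd fun j hj => ?_
    rw [h.getElem?_eq (by omega) (by rw [Vik.length_eq hv]; omega), Vik.getElem?_of_lt hv hj]
  · have := h (s - 1 - d) false true
      (by rw [Nat.sub_add_cancel (by omega)]; exact Vik.getElem?_of_le hu (by omega) (by omega))
      (Vik.getElem?_of_lt hv (by omega))
    cases this

theorem le_of_agreeShift_zero (hu : u ∈ Vik k s) (hv : v ∈ Vik k s') (h : AgreeShift u v 0) :
    s' ≤ s := by
  have hks := Vik.two_mul_add_two_le hu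
  by_contra hlt
  have := Vik.eq_sub_of_run_false hv fun j hj => by
    rw [← add_zero (j + (s - k)), ← h.getElem?_eq (by rw [Vik.length_eq hu]; omega)
      (by rw [Vik.length_eq hv]; omega), add_zero]
    exact Vik.getElem?_of_le hu (by omega) (by omega)
  omega

theorem eq_of_agreeShift_zero (hu : u ∈ Vik k s) (hv : v ∈ Vik k s') (h : AgreeShift u v 0) :
    u = v :=
  h.eq_of_length_eq <| by
    rw [Vik.length_eq hu, Vik.length_eq hv]
    exact le_antisymm (le_of_agreeShift_zero hv hu h.symm_zero) (le_of_agreeShift_zero hu hv h)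

end Vik

theorem entryZ_natCast (M : List (List Bool)) (p q : ℕ) :
    entryZ M p q = M[p]?.bind (·[q]?) := by
  simp [entryZ]

theorem exists_of_entryZ_eq_some {M : List (List Bool)} {i j : ℤ} {x : Bool}
    (h : entryZ M i j = some x) :
    ∃ (p q : ℕ) (r : List Bool), i = p ∧ j = q ∧ M[p]? = some r ∧ r[q]? = some x := by
  unfold entryZ at h
  split_ifs at h with hij
  obtain ⟨r, hr, hx⟩ := Option.bind_eq_some_iff.mp h
  exact ⟨i.toNat, j.toNat, r, (Int.toNat_of_nonneg hij.1).symm,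
    (Int.toNat_of_nonneg hij.2).symm, hr, hx⟩

theorem isFramed_of_mem_matSet {k h s : ℕ} {T B : List Bool} {M : List (List Bool)}
    (hM : M ∈ MatSet k h s T B) : IsFramed T B M := by
  obtain ⟨rfl, hhead, hlast, -, hinner⟩ := hM
  exact ⟨hhead, hlast, hinner⟩

section Overlap

variable {A A' : List (List Bool)} {a b : ℤ}

theorem MeetsAt.symm (h : MeetsAt A A' a b) : MeetsAt A' A (-a) (-b) := by
  obtain ⟨i, j, x, y, hx, hy⟩ := h
  exact ⟨i - a, j - b, y, x, hy, by simpa using hx⟩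

theorem AgreeAt.symm (h : AgreeAt A A' a b) : AgreeAt A' A (-a) (-b) := by
  intro i j x y hx hy
  rw [sub_neg_eq_add, sub_neg_eq_add] at hy
  exact (h _ _ y x hy (by simpa using hx)).symm

theorem AgreeAt.agreeShift (h : AgreeAt A A' a b) {p p' c : ℕ} {r r' : List Bool}
    (hr : A[p]? = some r) (hr' : A'[p']? = some r') (hp : (p : ℤ) = p' + a) (hc : b = c) :
    AgreeShift r r' c := by
  intro q x y hx hy
  refine h p (q + c : ℕ) x y (by rw [entryZ_natCast, hr]; exact hx) ?_
  rw [show (p : ℤ) - a = p' by omega, show ((q + c : ℕ) : ℤ) - b = q by push_cast; omega,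
    entryZ_natCast, hr']
  exact hy

variable {k s s' : ℕ}

theorem col_shift_nonpos (hA : ∀ r ∈ A, r ∈ Vik k s) (hA' : ∀ r ∈ A', r ∈ Vik k s')
    (hmeet : MeetsAt A A' a b) (hagree : AgreeAt A A' a b) : b ≤ 0 := by
  obtain ⟨i, j, x, y, hx, hy⟩ := hmeet
  obtain ⟨p, q, r, rfl, rfl, hr, hq⟩ := exists_of_entryZ_eq_some hx
  obtain ⟨p', q', r', hp, hq', hr', -⟩ := exists_of_entryZ_eq_some hy
  have hrs := Vik.length_eq (hA r (List.mem_of_getElem? hr))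
  have hqs : q < s := hrs ▸ (List.getElem?_eq_some_iff.mp hq).1
  by_contra hb
  exact Vik.not_agreeShift (hA r (List.mem_of_getElem? hr)) (hA' r' (List.mem_of_getElem? hr'))
    (d := q - q') (by omega) (by omega) (hagree.agreeShift hr hr' (by omega) (by omega))

theorem row_eq_of_agreeAt (hA : ∀ r ∈ A, r ∈ Vik k s) (hA' : ∀ r ∈ A', r ∈ Vik k s')
    (hagree : AgreeAt A A' a 0) {p p' : ℕ} {r r' : List Bool} (hr : A[p]? = some r)
    (hr' : A'[p']? = some r') (hp : (p : ℤ) = p' + a) : r = r' :=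
  Vik.eq_of_agreeShift_zero (hA r (List.mem_of_getElem? hr)) (hA' r' (List.mem_of_getElem? hr'))
    (hagree.agreeShift hr hr' hp Nat.cast_zero.symm)

theorem width_eq_of_agreeAt (hA : ∀ r ∈ A, r ∈ Vik k s) (hA' : ∀ r ∈ A', r ∈ Vik k s')
    (hmeet : MeetsAt A A' a 0) (hagree : AgreeAt A A' a 0) : s = s' := by
  obtain ⟨i, j, x, y, hx, hy⟩ := hmeet
  obtain ⟨p, q, r, rfl, rfl, hr, -⟩ := exists_of_entryZ_eq_some hx
  obtain ⟨p', q', r', hp, -, hr', -⟩ := exists_of_entryZ_eq_some hy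
  have hrr' := row_eq_of_agreeAt hA hA' hagree hr hr' (by omega)
  rw [← Vik.length_eq (hA r (List.mem_of_getElem? hr)),
    ← Vik.length_eq (hA' r' (List.mem_of_getElem? hr')), hrr']

theorem agreeShift_of_agreeAt (hA : ∀ r ∈ A, r ∈ Vik k s) (hA' : ∀ r ∈ A', r ∈ Vik k s')
    {d : ℕ} (hagree : AgreeAt A A' d 0) : AgreeShift A A' d :=
  fun _ _ _ hr hr' => row_eq_of_agreeAt hA hA' hagree hr hr' (by push_cast; ring)

theorem row_shift_nonpos {h h' : ℕ} {T B : List Bool} (hTB : T ≠ B)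
    (hA : A ∈ MatSet k h s T B) (hA' : A' ∈ MatSet k h' s' T B)
    (hmeet : MeetsAt A A' a 0) (hagree : AgreeAt A A' a 0) : a ≤ 0 := by
  obtain ⟨i, j, x, y, hx, hy⟩ := hmeet
  obtain ⟨p, q, r, rfl, rfl, hr, -⟩ := exists_of_entryZ_eq_some hx
  obtain ⟨p', q', r', hp, -, hr', -⟩ := exists_of_entryZ_eq_some hy
  have hpA : p < A.length := (List.getElem?_eq_some_iff.mp hr).1
  by_contra ha
  lift a to ℕ using by omega
  have := (isFramed_of_mem_matSet hA).eq_zero_of_agreeShift (isFramed_of_mem_matSet hA') hTB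
    (agreeShift_of_agreeAt hA.2.2.2.1 hA'.2.2.2.1 hagree) (by omega)
  omega

end Overlap

theorem stmt_7_general (k m n : ℕ)
    (T B : ℕ → List Bool)
    (hTB : ∀ s : ℕ, 2 * k + 3 ≤ s → s ≤ n →
      T s ∈ Vik k s ∧ B s ∈ Vik k s ∧ T s ≠ B s)
    (A A' : List (List Bool))
    (hA : ∃ h s : ℕ, 2 ≤ h ∧ h ≤ m ∧ 2 * k + 3 ≤ s ∧ s ≤ n ∧
      A ∈ MatSet k h s (T s) (B s))
    (hA' : ∃ h s : ℕ, 2 ≤ h ∧ h ≤ m ∧ 2 * k + 3 ≤ s ∧ s ≤ n ∧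
      A' ∈ MatSet k h s (T s) (B s)) :
    ¬ MOverlap A A' := by
  obtain ⟨h, s, -, -, hks, hsn, hMA⟩ := hA
  obtain ⟨h', s', -, -, -, -, hMA'⟩ := hA'
  have hrows := hMA.2.2.2.1
  have hrows' := hMA'.2.2.2.1
  rintro ⟨a, b, hne, hmeet, hagree⟩
  obtain rfl : b = 0 := le_antisymm (col_shift_nonpos hrows hrows' hmeet hagree)
    (neg_nonpos.mp (col_shift_nonpos hrows' hrows hmeet.symm hagree.symm))
  obtain rfl : s = s' := width_eq_of_agreeAt hrows hrows' hmeet hagree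
  have hTBs := (hTB s hks hsn).2.2
  obtain rfl : a = 0 := le_antisymm (row_shift_nonpos hTBs hMA hMA' hmeet hagree)
    (neg_nonpos.mp (row_shift_nonpos hTBs hMA' hMA hmeet.symm hagree.symm))
  exact hne ⟨rfl, rfl, (isFramed_of_mem_matSet hMA).eq_of_agreeShift_zero
    (isFramed_of_mem_matSet hMA') hTBs (agreeShift_of_agreeAt (d := 0) hrows hrows' hagree)⟩

/-- The set `𝒱_{m,n}^{(k)}` of matrices with between `2` and `m` rows and between
`2k+3` and `n` columns, with fixed first row `T s` and last row `B s` for each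
column count `s`, is a non-overlapping set of matrices. -/
theorem stmt_7 (k m n : ℕ) (hk : 3 ≤ k) (hm : 2 ≤ m) (hn : 2 * k + 3 ≤ n)
    (T B : ℕ → List Bool)
    (hTB : ∀ s : ℕ, 2 * k + 3 ≤ s → s ≤ n →
      T s ∈ Vik k s ∧ B s ∈ Vik k s ∧ T s ≠ B s)
    (A A' : List (List Bool))
    (hA : ∃ h s : ℕ, 2 ≤ h ∧ h ≤ m ∧ 2 * k + 3 ≤ s ∧ s ≤ n ∧
      A ∈ MatSet k h s (T s) (B s))
    (hA' : ∃ h s : ℕ, 2 ≤ h ∧ h ≤ m ∧ 2 * k + 3 ≤ s ∧ s ≤ n ∧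
      A' ∈ MatSet k h s (T s) (B s)) :
    ¬ MOverlap A A' :=
  stmt_7_general k m n T B hTB A A' hA hA'
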